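/- arXiv:1905.08098 — 2 statements merged into one kernel-verified Lean document; each statement's English description precedes it below -/
import Mathlib

section
/- For all positive integers p and q with p ≥ q, the minimum covering radius over all relabelings of the (p,q)-type group satisfies L_min(G_{p,q}) ≥ L_min(G_p), where G_p is the cyclic subgroup of S_p generated by the p-cycle (1,2,…,p). -/
open Equiv

/-- The ℓ∞-distance between two permutations of `Fin n`. -/
noncomputable def linfDist {n : ℕ} (f g : Perm (Fin n)) : ℕ :=
  Finset.univ.sup fun i : Fin n => (((f i).val : ℤ) - ((g i).val : ℤ)).natAbs

/-- The distance from a permutation to a code `C`. -/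
noncomputable def distToCode {n : ℕ} (f : Perm (Fin n)) (C : Set (Perm (Fin n))) : ℕ :=
  sInf (linfDist f '' C)

/-- The covering radius of a code `C ⊆ Sₙ`. -/
noncomputable def coveringRadius {n : ℕ} (C : Set (Perm (Fin n))) : ℕ :=
  sSup (Set.range fun f : Perm (Fin n) => distToCode f C)

/-- The relabeling `C^π = π C π⁻¹`. -/
def conjCode {n : ℕ} (π : Perm (Fin n)) (C : Set (Perm (Fin n))) : Set (Perm (Fin n)) :=
  (fun g => π * g * π⁻¹) '' C

/-- Maximum covering radius over all relabelings. -/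
noncomputable def Lmax {n : ℕ} (C : Set (Perm (Fin n))) : ℕ :=
  sSup (Set.range fun π : Perm (Fin n) => coveringRadius (conjCode π C))

/-- Minimum covering radius over all relabelings. -/
noncomputable def Lmin {n : ℕ} (C : Set (Perm (Fin n))) : ℕ :=
  sInf (Set.range fun π : Perm (Fin n) => coveringRadius (conjCode π C))

/-- The `(p,q)`-type group `G_{p,q} = ⟨(1,…,p), (p+1,…,p+q)⟩ ⊆ S_{p+q}`
(using `0`-indexed `Fin (p+q)`). -/
def Gpq (p q : ℕ) : Subgroup (Perm (Fin (p + q))) :=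
  Subgroup.closure
    { ((List.finRange p).map (Fin.castLE (Nat.le_add_right p q))).formPerm,
      ((List.finRange q).map (Fin.natAdd p)).formPerm }

/-- The transitive cyclic group `Gₙ = ⟨(1,2,…,n)⟩`. -/
def Gcyc (n : ℕ) : Subgroup (Perm (Fin n)) := Subgroup.closure {finRotate n}

/-- The natural dihedral group
`Dₙ = ⟨(1,2,…,n), ∏_{i=1}^{⌊n/2⌋} (i, n-i)⟩` (using `0`-indexed `Fin n`). -/
def Dn (n : ℕ) : Subgroup (Perm (Fin n)) :=
  Subgroup.closure
    { finRotate n,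
      (((List.finRange (n / 2)).map fun i =>
        Equiv.swap (⟨i.val, by have := i.isLt; omega⟩ : Fin n)
          (⟨n - 2 - i.val, by have := i.isLt; omega⟩ : Fin n)).prod) }

/-!
Every element of `G_{p,q}` maps the first block `{0, …, p-1}` to itself and acts there as an
element of `G_p`. Hence for a relabeling `π` the set `S = π {0, …, p-1}` is invariant under
`G_{p,q}^π`, and listing `S` in increasing order identifies that action with a relabeling
`G_p^ρ`. A permutation `f ∈ S_p`, carried onto `S` by the increasing bijection `Fin p ≃ S` and
extended by the identity, is at least as far from `G_{p,q}^π` as `f` is from `G_p^ρ`, because an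
increasing injection `Fin p → Fin (p+q)` does not shrink differences.
-/

open Function

def Subgroup.liftAlong {α β : Type*} (ι : α → β) (H : Subgroup (Perm α)) :
    Subgroup (Perm β) where
  carrier := {g | ∃ h ∈ H, Semiconj ι h g}
  one_mem' := ⟨1, H.one_mem, Semiconj.id_right⟩
  mul_mem' := by
    rintro g g' ⟨h, hH, hg⟩ ⟨h', hH', hg'⟩
    exact ⟨h * h', H.mul_mem hH hH', hg.comp_right hg'⟩
  inv_mem' := by
    rintro g ⟨h, hH, hg⟩
    exact ⟨h⁻¹, H.inv_mem hH, hg.inverses_right h.right_inv g.left_inv⟩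

theorem List.semiconj_formPerm_map {α β : Type*} [DecidableEq α] [DecidableEq β] {f : α → β}
    (hf : Injective f) (l : List α) : Semiconj f l.formPerm (l.map f).formPerm := by
  induction l with
  | nil => exact Semiconj.id_right
  | cons x l ih =>
    cases l with
    | nil => exact Semiconj.id_right
    | cons y l =>
      intro z
      simp only [List.map_cons, List.formPerm_cons_cons, Perm.coe_mul, comp_apply]
      rw [hf.map_swap, ← List.map_cons, ih]

theorem List.formPerm_finRange (n : ℕ) : (List.finRange n).formPerm = finRotate n := by
  ext j
  have hj : j.val < (List.finRange n).length := by simp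
  have key := List.formPerm_apply_getElem _ (List.nodup_finRange n) j.val hj
  simp only [List.getElem_finRange, Fin.cast_mk, List.length_finRange] at key
  rw [key, finRotate_apply]
  simp [Fin.val_add]

theorem Fin.natAbs_sub_le_of_strictMono {p N : ℕ} {m : Fin p → Fin N} (hm : StrictMono m)
    (a b : Fin p) : ((a : ℤ) - b).natAbs ≤ ((m a : ℤ) - m b).natAbs := by
  suffices h : ∀ a b : Fin p, a ≤ b → (b : ℕ) + 1 - a ≤ (m b : ℕ) + 1 - m a by
    rcases le_total a b with hab | hab
    · have := h a b hab; have := hm.monotone hab; omega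
    · have := h b a hab; have := hm.monotone hab; omega
  intro a b hab
  rw [← Fin.card_Icc, ← Fin.card_Icc]
  refine Finset.card_le_card_of_injOn m (fun x hx => ?_) hm.injective.injOn
  simp only [Finset.coe_Icc, Set.mem_Icc] at hx ⊢
  exact ⟨hm.monotone hx.1, hm.monotone hx.2⟩

theorem linfDist_le_of_semiconj {p N : ℕ} {m : Fin p → Fin N} (hm : StrictMono m)
    {f d : Perm (Fin p)} {F c : Perm (Fin N)} (hf : Semiconj m f F) (hd : Semiconj m d c) :
    linfDist f d ≤ linfDist F c := by
  refine Finset.sup_le fun i _ => ?_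
  calc (((f i : ℕ) : ℤ) - (d i : ℕ)).natAbs
      ≤ (((m (f i) : ℕ) : ℤ) - (m (d i) : ℕ)).natAbs :=
        Fin.natAbs_sub_le_of_strictMono hm _ _
    _ = (((F (m i) : ℕ) : ℤ) - (c (m i) : ℕ)).natAbs := by rw [hf i, hd i]
    _ ≤ linfDist F c :=
      Finset.le_sup (f := fun j => (((F j : ℕ) : ℤ) - (c j : ℕ)).natAbs) (Finset.mem_univ _)

theorem distToCode_le_linfDist {n : ℕ} (f : Perm (Fin n)) {C : Set (Perm (Fin n))}
    {c : Perm (Fin n)} (hc : c ∈ C) : distToCode f C ≤ linfDist f c :=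
  Nat.sInf_le ⟨c, hc, rfl⟩

theorem exists_linfDist_eq_distToCode {n : ℕ} (f : Perm (Fin n)) {C : Set (Perm (Fin n))}
    (hC : C.Nonempty) : ∃ c ∈ C, linfDist f c = distToCode f C := by
  obtain ⟨c, hc, h⟩ := Nat.sInf_mem (hC.image (linfDist f))
  exact ⟨c, hc, h⟩

theorem distToCode_le_coveringRadius {n : ℕ} (f : Perm (Fin n)) (C : Set (Perm (Fin n))) :
    distToCode f C ≤ coveringRadius C :=
  le_csSup (Set.finite_range _).bddAbove ⟨f, rfl⟩

theorem coveringRadius_le {n : ℕ} {C : Set (Perm (Fin n))} {r : ℕ}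
    (h : ∀ f, distToCode f C ≤ r) : coveringRadius C ≤ r :=
  csSup_le (Set.range_nonempty _) (Set.forall_mem_range.2 h)

theorem coveringRadius_le_of_strictMono {p N : ℕ} {m : Fin p → Fin N} (hm : StrictMono m)
    {D : Set (Perm (Fin p))} {C : Set (Perm (Fin N))} (hC : C.Nonempty)
    (hCD : ∀ c ∈ C, ∃ d ∈ D, Semiconj m d c) : coveringRadius D ≤ coveringRadius C := by
  refine coveringRadius_le fun f => ?_
  let m' : Fin p ↪ Fin N := ⟨m, hm.injective⟩
  let F := f.viaFintypeEmbedding m'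
  have hF : Semiconj m f F := fun x => (f.viaFintypeEmbedding_apply_image m' x).symm
  obtain ⟨c, hc, hFc⟩ := exists_linfDist_eq_distToCode F hC
  obtain ⟨d, hd, hcd⟩ := hCD c hc
  calc distToCode f D ≤ linfDist f d := distToCode_le_linfDist f hd
    _ ≤ linfDist F c := linfDist_le_of_semiconj hm hF hcd
    _ = distToCode F C := hFc
    _ ≤ coveringRadius C := distToCode_le_coveringRadius F C

/-- Sorting the image of `ι` turns it into an order embedding, at the cost of relabeling `D`. -/
theorem exists_coveringRadius_conjCode_le_of_injective {p N : ℕ} {ι : Fin p → Fin N}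
    (hι : Injective ι) {D : Set (Perm (Fin p))} {C : Set (Perm (Fin N))} (hC : C.Nonempty)
    (hCD : ∀ c ∈ C, ∃ d ∈ D, Semiconj ι d c) :
    ∃ ρ : Perm (Fin p), coveringRadius (conjCode ρ D) ≤ coveringRadius C := by
  let σ := Tuple.sort ι
  have hm : StrictMono (ι ∘ σ) :=
    (Tuple.monotone_sort ι).strictMono_of_injective (hι.comp σ.injective)
  refine ⟨σ⁻¹, coveringRadius_le_of_strictMono hm hC fun c hc => ?_⟩
  obtain ⟨d, hd, hcd⟩ := hCD c hc
  refine ⟨σ⁻¹ * d * σ⁻¹⁻¹, ⟨d, hd, rfl⟩, fun k => ?_⟩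
  simp [hcd (σ k)]

theorem Gpq_le_liftAlong_castLE (p q : ℕ) :
    Gpq p q ≤ (Gcyc p).liftAlong (Fin.castLE (Nat.le_add_right p q)) := by
  refine (Subgroup.closure_le _).2 ?_
  rintro g (rfl | rfl)
  · refine ⟨finRotate p, Subgroup.subset_closure rfl, ?_⟩
    rw [← List.formPerm_finRange]
    exact List.semiconj_formPerm_map (Fin.castLE_injective _) _
  · refine ⟨1, one_mem _, fun j => (List.formPerm_apply_of_notMem ?_).symm⟩
    simp only [List.mem_map, List.mem_finRange, true_and, not_exists]
    intro i hi
    have h : p + (i : ℕ) = j := congrArg Fin.val hi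
    omega

theorem stmt_8_general (p q : ℕ) :
    Lmin (Gcyc p : Set (Perm (Fin p))) ≤ Lmin (Gpq p q : Set (Perm (Fin (p + q)))) := by
  refine le_csInf (Set.range_nonempty _) (Set.forall_mem_range.2 fun π => ?_)
  have hι : Injective (π ∘ Fin.castLE (Nat.le_add_right p q)) :=
    π.injective.comp (Fin.castLE_injective _)
  have hlift : ∀ c ∈ conjCode π (Gpq p q : Set (Perm (Fin (p + q)))),
      ∃ d ∈ (Gcyc p : Set (Perm (Fin p))),
        Semiconj (π ∘ Fin.castLE (Nat.le_add_right p q)) d c := by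
    rintro _ ⟨g, hg, rfl⟩
    obtain ⟨d, hd, hgd⟩ := Gpq_le_liftAlong_castLE p q hg
    exact ⟨d, hd, fun j => by simp [hgd j]⟩
  obtain ⟨ρ, hρ⟩ := exists_coveringRadius_conjCode_le_of_injective hι
    (Set.Nonempty.image _ ⟨1, one_mem (Gpq p q)⟩) hlift
  exact (Nat.sInf_le (Set.mem_range_self ρ)).trans hρ

/-- For all positive integers `p ≥ q`, `L_min(G_{p,q}) ≥ L_min(G_p)`. -/
theorem stmt_8 (p q : ℕ) (hq : 1 ≤ q) (hpq : q ≤ p) :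
    Lmin (Gcyc p : Set (Perm (Fin p))) ≤ Lmin (Gpq p q : Set (Perm (Fin (p + q)))) :=
  stmt_8_general p q
end

section
/- For all positive integers p ≥ q with q = 1 or q = 2, the covering radius of the (p,q)-type group G_{p,q} in S_{p+q} equals p. -/
/-!
Every element of `G_{p,q}` preserves the blocks `{0, …, p - 1}` and `{p, …, p + q - 1}`, so the
transposition of `0` and `p`, which sends the point `p` of the upper block to `0`, is at distance
at least `p` from the group. Conversely, for `q = 1` no two permutations of `p + 1` points are
further apart than `p`. For `q = 2` the distance `p + 1` only arises where one permutation takes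
the value `0` and the other the value `p + 1`; since each generating cycle moves every point of its
block (here `p ≥ 2`), multiplying by a suitable choice of the two cycles avoids both coincidences.
-/

open Equiv

section LinfDist

variable {n : ℕ}

lemma natAbs_sub_le_linfDist (f g : Perm (Fin n)) (i : Fin n) :
    (((f i).val : ℤ) - (g i).val).natAbs ≤ linfDist f g :=
  Finset.le_sup (f := fun j => (((f j).val : ℤ) - (g j).val).natAbs) (Finset.mem_univ i)

lemma linfDist_le_iff {f g : Perm (Fin n)} {m : ℕ} :
    linfDist f g ≤ m ↔ ∀ i, (((f i).val : ℤ) - (g i).val).natAbs ≤ m := by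
  simp [linfDist]

lemma linfDist_le_sub_one (f g : Perm (Fin n)) : linfDist f g ≤ n - 1 :=
  linfDist_le_iff.2 fun i => by have := (f i).isLt; have := (g i).isLt; omega

/-- Two values in `Fin (m + 2)` are at distance `m + 1` only if they are `0` and `m + 1`. -/
lemma linfDist_le_of_apply_symm_ne {m : ℕ} {f g : Perm (Fin (m + 2))}
    (h_last : g (f.symm (Fin.last (m + 1))) ≠ 0) (h_zero : g (f.symm 0) ≠ Fin.last (m + 1)) :
    linfDist f g ≤ m := by
  refine linfDist_le_iff.2 fun i => ?_
  have h_last' : (f i).val = m + 1 → (g i).val ≠ 0 := fun hi => by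
    rwa [f.symm_apply_eq.2 (Fin.ext (by simpa using hi.symm)), Ne, Fin.ext_iff] at h_last
  have h_zero' : (f i).val = 0 → (g i).val ≠ m + 1 := fun hi => by
    rwa [f.symm_apply_eq.2 (Fin.ext hi.symm), Ne, Fin.ext_iff] at h_zero
  have := (f i).isLt
  have := (g i).isLt
  omega

lemma coveringRadius_eq_of_forall_exists {C : Set (Perm (Fin n))} {r : ℕ}
    (h_cover : ∀ f, ∃ g ∈ C, linfDist f g ≤ r) (h_far : ∃ f, ∀ g ∈ C, r ≤ linfDist f g) :
    coveringRadius C = r := by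
  have distToCode_le (f : Perm (Fin n)) : distToCode f C ≤ r := by
    obtain ⟨g, hg, hfg⟩ := h_cover f
    exact (Nat.sInf_le (Set.mem_image_of_mem _ hg)).trans hfg
  obtain ⟨f, hf⟩ := h_far
  obtain ⟨g, hg, -⟩ := h_cover f
  refine IsGreatest.csSup_eq ⟨⟨f, (distToCode_le f).antisymm ?_⟩, ?_⟩
  · exact le_csInf ⟨_, g, hg, rfl⟩ (by rintro _ ⟨g', hg', rfl⟩; exact hf g' hg')
  · rintro _ ⟨f', rfl⟩
    exact distToCode_le f'

end LinfDist

namespace Gpq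

variable {p q : ℕ}

open scoped Pointwise

abbrev lowCycle (p q : ℕ) : Perm (Fin (p + q)) :=
  ((List.finRange p).map (Fin.castLE (Nat.le_add_right p q))).formPerm

abbrev highCycle (p q : ℕ) : Perm (Fin (p + q)) :=
  ((List.finRange q).map (Fin.natAdd p)).formPerm

lemma mem_map_castLE_finRange {x : Fin (p + q)} :
    x ∈ (List.finRange p).map (Fin.castLE (Nat.le_add_right p q)) ↔ x.val < p := by
  simp only [List.mem_map, List.mem_finRange, true_and]
  exact ⟨by rintro ⟨a, rfl⟩; exact a.isLt, fun h => ⟨⟨x, h⟩, Fin.ext rfl⟩⟩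

lemma mem_map_natAdd_finRange {x : Fin (p + q)} :
    x ∈ (List.finRange q).map (Fin.natAdd p) ↔ p ≤ x.val := by
  simp only [List.mem_map, List.mem_finRange, true_and]
  refine ⟨by rintro ⟨a, rfl⟩; simp, fun h => ⟨⟨x - p, by omega⟩, Fin.ext ?_⟩⟩
  simp only [Fin.natAdd]
  omega

lemma lowCycle_apply_of_le {x : Fin (p + q)} (hx : p ≤ x.val) : lowCycle p q x = x :=
  List.formPerm_apply_of_notMem (by rw [mem_map_castLE_finRange]; omega)

lemma highCycle_apply_of_lt {x : Fin (p + q)} (hx : x.val < p) : highCycle p q x = x :=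
  List.formPerm_apply_of_notMem (by rw [mem_map_natAdd_finRange]; omega)

lemma lowCycle_apply_ne_self (hp : 2 ≤ p) {x : Fin (p + q)} (hx : x.val < p) :
    lowCycle p q x ≠ x := by
  rw [List.formPerm_apply_mem_ne_self_iff _ _ _ (mem_map_castLE_finRange.2 hx)]
  · simpa using hp
  · exact (List.nodup_finRange p).map (Fin.castLE_injective _)

lemma highCycle_apply_ne_self (hq : 2 ≤ q) {x : Fin (p + q)} (hx : p ≤ x.val) :
    highCycle p q x ≠ x := by
  rw [List.formPerm_apply_mem_ne_self_iff _ _ _ (mem_map_natAdd_finRange.2 hx)]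
  · simpa using hq
  · exact (List.nodup_finRange q).map (Fin.natAdd_injective _ _)

abbrev lowBlock (p q : ℕ) : Set (Fin (p + q)) := {x | x.val < p}

lemma le_stabilizer_lowBlock : Gpq p q ≤ MulAction.stabilizer _ (lowBlock p q) := by
  refine (Subgroup.closure_le _).2 ?_
  rintro _ (rfl | rfl) <;> refine MulAction.mem_stabilizer_set.2 fun x => ?_
  · by_cases hx : x.val < p
    · simpa [hx] using mem_map_castLE_finRange.1
        (List.formPerm_apply_mem_of_mem (mem_map_castLE_finRange.2 hx))
    · simp [lowCycle_apply_of_le (not_lt.1 hx)]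
  · by_cases hx : x.val < p
    · simp [highCycle_apply_of_lt hx]
    · simpa [hx] using mem_map_natAdd_finRange.1
        (List.formPerm_apply_mem_of_mem (mem_map_natAdd_finRange.2 (not_lt.1 hx)))

lemma apply_lt_iff_of_mem {g : Perm (Fin (p + q))} (hg : g ∈ Gpq p q) (x : Fin (p + q)) :
    (g x).val < p ↔ x.val < p :=
  MulAction.mem_stabilizer_set.1 (le_stabilizer_lowBlock hg) x

lemma lowCycle_mem : lowCycle p q ∈ Gpq p q :=
  Subgroup.subset_closure (Set.mem_insert _ _)

lemma highCycle_mem : highCycle p q ∈ Gpq p q :=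
  Subgroup.subset_closure (Set.mem_insert_of_mem _ rfl)

lemma le_linfDist_of_apply_eq_zero {f g : Perm (Fin (p + q))} (hg : g ∈ Gpq p q)
    {i : Fin (p + q)} (hi : p ≤ i.val) (hfi : (f i).val = 0) : p ≤ linfDist f g := by
  have hgi : p ≤ (g i).val := not_lt.1 fun h => (not_lt.2 hi) ((apply_lt_iff_of_mem hg i).1 h)
  have := natAbs_sub_le_linfDist f g i
  omega

lemma exists_mem_apply_ne (hp : 2 ≤ p) (a b : Fin (p + 2)) :
    ∃ g ∈ Gpq p 2, g a ≠ 0 ∧ g b ≠ Fin.last (p + 1) := by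
  obtain ⟨u, hu, hu_high, hua⟩ : ∃ u ∈ Gpq p 2, (∀ x : Fin (p + 2), p ≤ x.val → u x = x) ∧
      (a.val < p → u a ≠ 0) := by
    by_cases ha : a = 0
    · exact ⟨_, lowCycle_mem, fun x => lowCycle_apply_of_le,
        fun h => ha ▸ lowCycle_apply_ne_self hp (ha ▸ h)⟩
    · exact ⟨1, one_mem _, fun _ _ => rfl, fun _ => ha⟩
  obtain ⟨v, hv, hv_low, hvb⟩ : ∃ v ∈ Gpq p 2, (∀ x : Fin (p + 2), x.val < p → v x = x) ∧
      (p ≤ b.val → v b ≠ Fin.last (p + 1)) := by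
    by_cases hb : b = Fin.last (p + 1)
    · exact ⟨_, highCycle_mem, fun x => highCycle_apply_of_lt,
        fun h => hb ▸ highCycle_apply_ne_self le_rfl (hb ▸ h)⟩
    · exact ⟨1, one_mem _, fun _ _ => rfl, fun _ => hb⟩
  refine ⟨u * v, mul_mem hu hv, ?_, ?_⟩
  · by_cases ha : a.val < p
    · rw [Perm.mul_apply, hv_low a ha]
      exact hua ha
    · have := (apply_lt_iff_of_mem (mul_mem hu hv) a).not.2 ha
      exact fun h => this (by rw [h, Fin.val_zero]; omega)
  · by_cases hb : b.val < p
    · have := (apply_lt_iff_of_mem (mul_mem hu hv) b).2 hb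
      exact fun h => by simp [h] at this
    · have hvb' : p ≤ (v b).val := not_lt.1 ((apply_lt_iff_of_mem hv b).not.2 hb)
      rw [Perm.mul_apply, hu_high _ hvb']
      exact hvb (not_lt.1 hb)

lemma exists_mem_linfDist_le (hq : q = 1 ∨ q = 2) (hpq : q ≤ p) (f : Perm (Fin (p + q))) :
    ∃ g ∈ Gpq p q, linfDist f g ≤ p := by
  rcases hq with rfl | rfl
  · exact ⟨1, one_mem _, linfDist_le_sub_one f 1⟩
  · obtain ⟨g, hg, h_last, h_zero⟩ := exists_mem_apply_ne hpq (f.symm (Fin.last _)) (f.symm 0)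
    exact ⟨g, hg, linfDist_le_of_apply_symm_ne h_last h_zero⟩

end Gpq

/-- For all positive integers `p ≥ q` with `q = 1` or `q = 2`,
the covering radius of `G_{p,q}` equals `p`. -/
theorem stmt_14 (p q : ℕ) (hq : q = 1 ∨ q = 2) (hpq : q ≤ p) :
    coveringRadius (Gpq p q : Set (Perm (Fin (p + q)))) = p := by
  have hq1 : 1 ≤ q := by omega
  refine coveringRadius_eq_of_forall_exists (Gpq.exists_mem_linfDist_le hq hpq)
    ⟨swap ⟨0, by omega⟩ ⟨p, by omega⟩, fun g hg => ?_⟩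
  exact Gpq.le_linfDist_of_apply_eq_zero hg (i := ⟨p, by omega⟩) le_rfl (by simp)
end
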